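/- Let J, R ∈ ℝ^{n×n} with J = −J^T and R = R^T positive semidefinite, and let h ≥ 0. Then the Strang splitting flux of the J–R decomposition of ẋ = (J − R)x is nonexpansive in the Euclidean norm: for every x ∈ ℝ^n, ‖exp(−(h/2)R)·exp(hJ)·exp(−(h/2)R)·x‖₂ ≤ ‖x‖₂. (The Strang splitting preserves the dissipation inequality of the homogeneous pH-ODE with Hamiltonian H(x) = (1/2)‖x‖₂².) -/

import Mathlib

/-!
Each of the three factors is a contraction, because each is `exp (t • A)` with `t ≥ 0` for a
dissipative `A`, i.e. `y ⬝ᵥ A *ᵥ y ≤ 0` for all `y`: this holds for `A = -R` since `R` is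
positive semidefinite, and for `A = J` with equality since `J` is skew. For such `A` the energy
`t ↦ ‖exp (t • A) x‖²` has derivative `2 ⟪exp (t • A) x, A exp (t • A) x⟫ ≤ 0`, so it never exceeds
its value `‖x‖²` at `t = 0`.
-/

open Matrix
open scoped Matrix.Norms.L2Operator

theorem HasDerivAt.dotProduct {𝕜 ι : Type*} [NontriviallyNormedField 𝕜] [Fintype ι]
    {f g : 𝕜 → ι → 𝕜} {f' g' : ι → 𝕜} {t : 𝕜}
    (hf : HasDerivAt f f' t) (hg : HasDerivAt g g' t) :
    HasDerivAt (fun s => f s ⬝ᵥ g s) (f' ⬝ᵥ g t + f t ⬝ᵥ g') t := by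
  unfold _root_.dotProduct
  rw [← Finset.sum_add_distrib]
  exact HasDerivAt.fun_sum fun i _ => (hasDerivAt_pi.1 hf i).mul (hasDerivAt_pi.1 hg i)

namespace Matrix

variable {ι : Type*} [Fintype ι]

theorem hasDerivAt_exp_smul_mulVec {𝕜 : Type*} [RCLike 𝕜] [DecidableEq ι]
    (A : Matrix ι ι 𝕜) (x : ι → 𝕜) (t : 𝕜) :
    HasDerivAt (fun s => NormedSpace.exp (s • A) *ᵥ x)
      (A *ᵥ NormedSpace.exp (t • A) *ᵥ x) t := by
  let applyAt : Matrix ι ι 𝕜 →L[𝕜] ι → 𝕜 :=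
    LinearMap.toContinuousLinearMap ((mulVecBilin 𝕜 𝕜).flip x)
  exact (applyAt.hasFDerivAt.comp_hasDerivAt t (hasDerivAt_exp_smul_const' A t)).congr_deriv
    (by simp [applyAt, mulVec_mulVec])

theorem dotProduct_mulVec_self_eq_zero_of_transpose_eq_neg {α : Type*} [CommRing α]
    [IsAddTorsionFree α] {J : Matrix ι ι α} (hJ : Jᵀ = -J) (y : ι → α) :
    y ⬝ᵥ J *ᵥ y = 0 := by
  refine self_eq_neg.mp ?_
  conv_lhs => rw [dotProduct_mulVec, ← mulVec_transpose, hJ, neg_mulVec, neg_dotProduct,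
    dotProduct_comm]

theorem dotProduct_self_exp_smul_mulVec_le [DecidableEq ι] {A : Matrix ι ι ℝ}
    (hA : ∀ y, y ⬝ᵥ A *ᵥ y ≤ 0) {t : ℝ} (ht : 0 ≤ t) (x : ι → ℝ) :
    NormedSpace.exp (t • A) *ᵥ x ⬝ᵥ NormedSpace.exp (t • A) *ᵥ x ≤ x ⬝ᵥ x := by
  set g := fun s : ℝ => NormedSpace.exp (s • A) *ᵥ x
  have hderiv (s : ℝ) : HasDerivAt (fun s => g s ⬝ᵥ g s) (2 * (g s ⬝ᵥ A *ᵥ g s)) s := by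
    refine ((hasDerivAt_exp_smul_mulVec A x s).dotProduct
      (hasDerivAt_exp_smul_mulVec A x s)).congr_deriv ?_
    rw [dotProduct_comm]
    ring
  have hanti : Antitone fun s => g s ⬝ᵥ g s :=
    antitone_of_deriv_nonpos (fun s => (hderiv s).differentiableAt) fun s => by
      rw [(hderiv s).deriv]
      linarith [hA (g s)]
  simpa [g] using hanti ht

end Matrix

theorem strang_JR_splitting_nonexpansive_general {n : ℕ}
    (J R : Matrix (Fin n) (Fin n) ℝ)
    (hJ : J = -Jᵀ) (hRpsd : R.PosSemidef)
    (h : ℝ) (hh : 0 ≤ h) :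
    ∀ x : Fin n → ℝ,
      Real.sqrt
          ((NormedSpace.exp (-(h / 2) • R) * NormedSpace.exp (h • J) *
              NormedSpace.exp (-(h / 2) • R)).mulVec x ⬝ᵥ
            (NormedSpace.exp (-(h / 2) • R) * NormedSpace.exp (h • J) *
              NormedSpace.exp (-(h / 2) • R)).mulVec x) ≤
        Real.sqrt (x ⬝ᵥ x) := by
  intro x
  have hJ_dissipative (y : Fin n → ℝ) : y ⬝ᵥ J *ᵥ y ≤ 0 :=
    (dotProduct_mulVec_self_eq_zero_of_transpose_eq_neg (neg_eq_iff_eq_neg.mp hJ.symm) y).le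
  have hR_dissipative (y : Fin n → ℝ) : y ⬝ᵥ (-R) *ᵥ y ≤ 0 := by
    simpa [neg_mulVec] using hRpsd.dotProduct_mulVec_nonneg y
  rw [neg_smul, ← smul_neg, ← mulVec_mulVec, ← mulVec_mulVec]
  set D := NormedSpace.exp ((h / 2) • -R)
  set U := NormedSpace.exp (h • J)
  refine Real.sqrt_le_sqrt ?_
  calc D *ᵥ U *ᵥ D *ᵥ x ⬝ᵥ D *ᵥ U *ᵥ D *ᵥ x
      ≤ U *ᵥ D *ᵥ x ⬝ᵥ U *ᵥ D *ᵥ x :=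
        dotProduct_self_exp_smul_mulVec_le hR_dissipative (by positivity) _
    _ ≤ D *ᵥ x ⬝ᵥ D *ᵥ x := dotProduct_self_exp_smul_mulVec_le hJ_dissipative hh _
    _ ≤ x ⬝ᵥ x := dotProduct_self_exp_smul_mulVec_le hR_dissipative (by positivity) _

/-- The Strang splitting flux `exp(-(h/2)R)·exp(hJ)·exp(-(h/2)R)` of the J–R
decomposition of the homogeneous pH-ODE `ẋ = (J - R) x` (with `J` skew-symmetric and
`R` symmetric positive semidefinite) is nonexpansive in the Euclidean norm
`‖v‖₂ = (v ⬝ᵥ v)^(1/2)`, i.e. it preserves the dissipation inequality for the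
Hamiltonian `H(x) = (1/2)‖x‖₂²`. -/
theorem strang_JR_splitting_nonexpansive {n : ℕ}
    (J R : Matrix (Fin n) (Fin n) ℝ)
    (hJ : J = -Jᵀ) (hR : Rᵀ = R) (hRpsd : R.PosSemidef)
    (h : ℝ) (hh : 0 ≤ h) :
    ∀ x : Fin n → ℝ,
      Real.sqrt
          ((NormedSpace.exp (-(h / 2) • R) * NormedSpace.exp (h • J) *
              NormedSpace.exp (-(h / 2) • R)).mulVec x ⬝ᵥ
            (NormedSpace.exp (-(h / 2) • R) * NormedSpace.exp (h • J) *
              NormedSpace.exp (-(h / 2) • R)).mulVec x) ≤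
        Real.sqrt (x ⬝ᵥ x) :=
  strang_JR_splitting_nonexpansive_general J R hJ hRpsd h hh
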